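/- Let L_1,...,L_n,L_{n+1} be i.i.d. real random variables whose common distribution is atomless (every single point has probability zero), and let 1 ≤ k ≤ n. Let L_(k) denote the k-th smallest value among L_1,...,L_n. Then P( L_{n+1} ≤ L_(k) ) = k/(n+1). -/

import Mathlib

open MeasureTheory ProbabilityTheory

/-- The `k`-th smallest value among `f 0, ..., f (n-1)` (the `k`-th order statistic). -/
noncomputable def kthSmallest {n : ℕ} (k : ℕ) (f : Fin n → ℝ) : ℝ :=
  sInf {t : ℝ | k ≤ (Finset.univ.filter fun i => f i ≤ t).card}

/-!
`L (last n)` is at most the `k`-th smallest of the others iff fewer than `k` of them lie strictly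
below it, i.e. iff its rank `#{i | L i < L (last n)}` among all `n + 1` values is `< k`.
The joint law is the product `ν^(n+1)` of the common marginal, which is invariant under permuting
coordinates, so every coordinate has the same rank distribution. Since `ν` is atomless, the
coordinates are a.s. distinct, and then each rank `r ≤ n` is taken by exactly one coordinate;
hence every rank has probability `1 / (n + 1)`.
-/

open Finset

theorem le_kthSmallest_iff {n k : ℕ} (hk1 : 1 ≤ k) (hkn : k ≤ n) (f : Fin n → ℝ) (x : ℝ) :
    x ≤ kthSmallest k f ↔ #{i | f i < x} < k := by
  set A := {t : ℝ | k ≤ #{i | f i ≤ t}}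
  obtain ⟨lo, hlo⟩ := (Set.finite_range f).bddBelow
  obtain ⟨hi, hhi⟩ := (Set.finite_range f).bddAbove
  have hne : A.Nonempty :=
    ⟨hi, by simpa [A, filter_true_of_mem fun i _ => hhi (Set.mem_range_self i)] using hkn⟩
  have hbdd : BddBelow A := by
    refine ⟨lo, fun t ht => ?_⟩
    obtain ⟨i, hi⟩ := card_pos.mp (hk1.trans ht)
    exact (hlo (Set.mem_range_self i)).trans (mem_filter.mp hi).2
  constructor
  · intro hx
    by_contra! hk
    have hs : ({i | f i < x} : Finset (Fin n)).Nonempty := card_pos.mp (hk1.trans hk)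
    have hlt : ({i | f i < x} : Finset (Fin n)).sup' hs f < x :=
      (sup'_lt_iff hs).mpr fun i hi => (mem_filter.mp hi).2
    have hmem : ({i | f i < x} : Finset (Fin n)).sup' hs f ∈ A :=
      hk.trans (card_le_card fun i hi => mem_filter.mpr ⟨mem_univ i, le_sup' f hi⟩)
    exact (hx.trans (csInf_le hbdd hmem)).not_gt hlt
  · intro hk
    refine le_csInf hne fun t ht => not_lt.mp fun htx => ?_
    have hsub : ({i | f i ≤ t} : Finset (Fin n)) ⊆ ({i | f i < x} : Finset (Fin n)) := fun i hi =>
      mem_filter.mpr ⟨mem_univ i, (mem_filter.mp hi).2.trans_lt htx⟩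
    exact (ht.trans (card_le_card hsub)).not_gt hk

def coordRank {ι α : Type*} [Fintype ι] [LinearOrder α] (v : ι → α) (j : ι) : ℕ :=
  #{i | v i < v j}

section coordRank

variable {ι α : Type*} [Fintype ι] [LinearOrder α]

theorem coordRank_comp_perm (v : ι → α) (e : Equiv.Perm ι) (j : ι) :
    coordRank (v ∘ e) j = coordRank v (e j) :=
  card_equiv e (by simp)

theorem coordRank_lt_card (v : ι → α) (j : ι) : coordRank v j < Fintype.card ι :=
  card_lt_univ_of_notMem (x := j) (by simp)

theorem coordRank_lt_coordRank {v : ι → α} {a b : ι} (h : v a < v b) :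
    coordRank v a < coordRank v b := by
  refine card_lt_card ⟨fun i hi => mem_filter.mpr ⟨mem_univ i, (mem_filter.mp hi).2.trans h⟩,
    fun hsub => ?_⟩
  simpa using hsub (mem_filter.mpr ⟨mem_univ a, h⟩)

theorem coordRank_injective {v : ι → α} (hv : Function.Injective v) :
    Function.Injective (coordRank v) := by
  intro a b hab
  by_contra hne
  rcases (hv.ne hne).lt_or_gt with h | h
  · exact (coordRank_lt_coordRank h).ne hab
  · exact (coordRank_lt_coordRank h).ne' hab

theorem exists_coordRank_eq {v : ι → α} (hv : Function.Injective v) {r : ℕ}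
    (hr : r < Fintype.card ι) : ∃ j, coordRank v j = r := by
  have himage : univ.image (coordRank v) = range (Fintype.card ι) :=
    eq_of_subset_of_card_le (fun _ hx => by
        obtain ⟨j, -, rfl⟩ := mem_image.mp hx
        exact mem_range.mpr (coordRank_lt_card v j))
      (by rw [card_image_of_injective _ (coordRank_injective hv), card_range, card_univ])
  obtain ⟨j, -, hj⟩ := mem_image.mp (himage ▸ mem_range.mpr hr)
  exact ⟨j, hj⟩

theorem coordRank_last {n : ℕ} (v : Fin (n + 1) → α) :
    coordRank v (Fin.last n) = #{i : Fin n | v i.castSucc < v (Fin.last n)} := by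
  rw [coordRank, card_filter, Fin.sum_univ_castSucc, card_filter]
  simp

end coordRank

theorem measurePreserving_comp_perm {ι α : Type*} [Fintype ι] [MeasurableSpace α]
    (μ : Measure α) [SigmaFinite μ] (e : Equiv.Perm ι) :
    MeasurePreserving (fun v : ι → α => v ∘ e) (Measure.pi fun _ => μ) (Measure.pi fun _ => μ) :=
  measurePreserving_arrowCongr' (fun _ => μ) (fun _ => μ) e.symm (MeasurableEquiv.refl α)
    fun _ => MeasurePreserving.id μ

theorem Measure.prod_diagonal_eq_zero {α : Type*} [MeasurableSpace α] [MeasurableEq α]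
    (μ ν : Measure α) [SFinite ν] [NullSingletonClass ν] : μ.prod ν (Set.diagonal α) = 0 :=
  (Measure.measure_prod_null measurableSet_diagonal).2 <|
    .of_forall fun x => by simp [Set.preimage]

section atomless

variable {ι α : Type*} [Fintype ι] [MeasurableSpace α] [MeasurableEq α]
  (μ : Measure α) [IsProbabilityMeasure μ] [NullSingletonClass μ]

theorem measure_pi_setOf_apply_eq_apply {i j : ι} (hij : i ≠ j) :
    Measure.pi (fun _ : ι => μ) {v | v i = v j} = 0 := by
  have hindep : IndepFun (fun v : ι → α => v i) (fun v => v j) (Measure.pi fun _ => μ) :=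
    (iIndepFun_pi (X := fun _ => id) fun _ => aemeasurable_id).indepFun hij
  have hpair : (Measure.pi fun _ : ι => μ).map (fun v => (v i, v j)) = μ.prod μ := by
    rw [(indepFun_iff_map_prod_eq_prod_map_map (measurable_pi_apply i).aemeasurable
      (measurable_pi_apply j).aemeasurable).mp hindep, (measurePreserving_eval _ i).map_eq,
      (measurePreserving_eval _ j).map_eq]
  rw [← Measure.prod_diagonal_eq_zero μ μ, ← hpair,
    Measure.map_apply (by fun_prop) measurableSet_diagonal]
  rfl

theorem ae_injective_pi : ∀ᵐ v ∂Measure.pi (fun _ : ι => μ), Function.Injective v := by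
  have hne : ∀ i j, ∀ᵐ v ∂Measure.pi (fun _ : ι => μ), i ≠ j → v i ≠ v j := fun i j => by
    by_cases hij : i = j
    · simp [hij]
    · simpa [hij, ae_iff] using measure_pi_setOf_apply_eq_apply μ hij
  filter_upwards [ae_all_iff.2 fun i => ae_all_iff.2 (hne i)] with v hv a b hab
  by_contra h
  exact hv a b h hab

end atomless

section order

variable {ι α : Type*} [Fintype ι] [LinearOrder α] [TopologicalSpace α] [OrderClosedTopology α]
  [SecondCountableTopology α] [MeasurableSpace α] [OpensMeasurableSpace α]

theorem measurable_coordRank (j : ι) : Measurable fun v : ι → α => coordRank v j := by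
  simp only [coordRank, card_filter]
  exact Finset.measurable_sum _ fun i _ => Measurable.ite
    (measurableSet_lt (measurable_pi_apply i) (measurable_pi_apply j)) measurable_const
    measurable_const

variable (μ : Measure α) [IsProbabilityMeasure μ]

theorem identDistrib_coordRank [DecidableEq ι] (j j' : ι) :
    IdentDistrib (fun v : ι → α => coordRank v j) (fun v => coordRank v j')
      (Measure.pi fun _ => μ) (Measure.pi fun _ => μ) where
  aemeasurable_fst := (measurable_coordRank j).aemeasurable
  aemeasurable_snd := (measurable_coordRank j').aemeasurable
  map_eq := by
    have hswap : (fun v : ι → α => coordRank v j') =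
        (fun v => coordRank v j) ∘ fun v => v ∘ Equiv.swap j j' := by
      funext v
      simp [coordRank_comp_perm]
    rw [hswap, ← Measure.map_map (measurable_coordRank j)
      (measurePreserving_comp_perm μ _).measurable, (measurePreserving_comp_perm μ _).map_eq]

variable [NullSingletonClass μ]

theorem measure_pi_coordRank_eq (j : ι) {r : ℕ} (hr : r < Fintype.card ι) :
    Measure.pi (fun _ : ι => μ) {v | coordRank v j = r} = (Fintype.card ι : ENNReal)⁻¹ := by
  classical
  set π := Measure.pi fun _ : ι => μ
  have hmeas : ∀ j, MeasurableSet {v : ι → α | coordRank v j = r} := fun j =>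
    measurable_coordRank j (measurableSet_singleton r)
  have hsame : ∀ j', π {v | coordRank v j' = r} = π {v | coordRank v j = r} := fun j' =>
    (identDistrib_coordRank μ j' j).measure_mem_eq (measurableSet_singleton r)
  have hdisj : Pairwise fun a b =>
      AEDisjoint π {v : ι → α | coordRank v a = r} {v | coordRank v b = r} :=
    fun a b hab => measure_mono_null (fun v hv hinj => hab (coordRank_injective hinj
      (hv.1.trans hv.2.symm))) (ae_injective_pi μ)
  have hcover : π (⋃ j, {v : ι → α | coordRank v j = r}) = 1 := by
    refine (prob_compl_eq_zero_iff (MeasurableSet.iUnion hmeas)).mp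
      (measure_mono_null (t := {v | ¬Function.Injective v}) (fun v hv hinj => ?_)
        (ae_injective_pi μ))
    obtain ⟨j, hj⟩ := exists_coordRank_eq hinj hr
    exact hv (Set.mem_iUnion.mpr ⟨j, hj⟩)
  rw [measure_iUnion₀ hdisj fun j => (hmeas j).nullMeasurableSet, tsum_fintype] at hcover
  simp only [hsame, sum_const, card_univ, nsmul_eq_mul] at hcover
  exact ENNReal.eq_inv_of_mul_eq_one_left ((mul_comm _ _).trans hcover)

theorem measure_pi_coordRank_lt (j : ι) {k : ℕ} (hk : k ≤ Fintype.card ι) :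
    Measure.pi (fun _ : ι => μ) {v | coordRank v j < k} = k / Fintype.card ι := by
  have hfibers : {v : ι → α | coordRank v j < k} = (coordRank · j) ⁻¹' ↑(range k) := by
    ext v; simp
  rw [hfibers, ← sum_measure_preimage_singleton _ fun r _ =>
      measurable_coordRank j (measurableSet_singleton r)]
  refine (sum_congr rfl fun r hr =>
    measure_pi_coordRank_eq μ j ((mem_range.mp hr).trans_le hk)).trans ?_
  simp [div_eq_mul_inv]

end order

/-- **Exact rank probability for i.i.d. atomless scores.**  If `L 0, …, L n` are i.i.d. real
random variables with an atomless common distribution, and `1 ≤ k ≤ n`, then the last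
variable is at most the `k`-th smallest of the first `n` with probability exactly
`k/(n+1)`. -/
theorem iid_atomless_rank_lemma
    {Ω : Type*} [MeasurableSpace Ω] (P : Measure Ω) [IsProbabilityMeasure P]
    {n : ℕ} (L : Fin (n + 1) → Ω → ℝ)
    (hmeas : ∀ i, Measurable (L i))
    (hindep : iIndepFun L P)
    (hid : ∀ i j, IdentDistrib (L i) (L j) P P)
    (hatomless : ∀ (i : Fin (n + 1)) (c : ℝ), P {ω | L i ω = c} = 0)
    (k : ℕ) (hk1 : 1 ≤ k) (hkn : k ≤ n) :
    P {ω | L (Fin.last n) ω ≤ kthSmallest k (fun i : Fin n => L i.castSucc ω)} =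
      (k : ENNReal) / (n + 1) := by
  set ν := P.map (L (Fin.last n))
  have : IsProbabilityMeasure ν := Measure.isProbabilityMeasure_map (hmeas _).aemeasurable
  have : NullSingletonClass ν := ⟨fun x => by
    rw [Measure.map_apply (hmeas _) (measurableSet_singleton x)]
    exact hatomless _ x⟩
  have hlaw : P.map (fun ω i => L i ω) = Measure.pi fun _ => ν := by
    rw [hindep.map_fun_eq_pi_map fun i => (hmeas i).aemeasurable]
    exact congrArg Measure.pi (funext fun i => (hid i _).map_eq)
  have hevent : {ω | L (Fin.last n) ω ≤ kthSmallest k (fun i : Fin n => L i.castSucc ω)} =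
      (fun ω i => L i ω) ⁻¹' {v | coordRank v (Fin.last n) < k} := by
    ext ω
    simp [le_kthSmallest_iff hk1 hkn, coordRank_last]
  have hmeasEvent : MeasurableSet {v : Fin (n + 1) → ℝ | coordRank v (Fin.last n) < k} :=
    measurable_coordRank _ measurableSet_Iio
  rw [hevent, ← Measure.map_apply (measurable_pi_lambda _ hmeas) hmeasEvent, hlaw,
    measure_pi_coordRank_lt ν _ (by simpa using hkn.trans n.le_succ)]
  simp
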